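/- (Moreau identity) Let p: X → (−∞, +∞] be a closed proper convex function on a real finite dimensional Euclidean space X, with Fenchel conjugate p*, and let t > 0. Then for every x ∈ X, Prox_{tp}(x) + t · Prox_{p*/t}(x/t) = x. -/

import Mathlib

/-!
Let `u = Prox_{tp}(x)` and `v = (x - u)/t`. Comparing the prox objective at `u` with its value at
`u + s(w - u)`, dividing by `s` and letting `s → 0` shows that `v` is a subgradient of `p` at `u`.
Then `p* ≥ ⟪u, ·⟫ - p(u)` with equality at `v`, so `p*/t` lies above an affine function touching it
at `v`; adding `½‖· - x/t‖²` to that affine function gives a quadratic minimised exactly at `v`, hence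
`v = Prox_{p*/t}(x/t)` and `u + t v = x`.
-/

open Set Classical

noncomputable section

/-- Convexity of an `EReal`-valued function. -/
def EConvex {E : Type*} [AddCommGroup E] [Module ℝ E] (g : E → EReal) : Prop :=
  ∀ u v : E, ∀ a b : ℝ, 0 ≤ a → 0 ≤ b → a + b = 1 →
    g (a • u + b • v) ≤ (a : EReal) * g u + (b : EReal) * g v

/-- The Fenchel conjugate of an `EReal`-valued function. -/
def conjE {E : Type*} [NormedAddCommGroup E] [InnerProductSpace ℝ E]
    (p : E → EReal) (z : E) : EReal :=
  ⨆ u : E, (((inner ℝ u z : ℝ) : EReal) - p u)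

open Filter Topology
open scoped RealInnerProductSpace

theorem nonneg_of_forall_nonneg_add_mul {A B : ℝ}
    (h : ∀ s : ℝ, 0 < s → s ≤ 1 → 0 ≤ A + s * B) : 0 ≤ A := by
  have hlim : Tendsto (fun s : ℝ => A + s * B) (𝓝[>] 0) (𝓝 A) := by
    have : Continuous fun s : ℝ => A + s * B := by fun_prop
    simpa using (this.tendsto 0).mono_left nhdsWithin_le_nhds
  refine ge_of_tendsto hlim ?_
  filter_upwards [Ioc_mem_nhdsGT zero_lt_one] with s hs using h s hs.1 hs.2

namespace EReal

theorem coe_mul_ne_top_iff {c : ℝ} (hc : 0 < c) {z : EReal} : (c : EReal) * z ≠ ⊤ ↔ z ≠ ⊤ := by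
  simp [mul_ne_top, hc.le, hc.not_ge]

theorem coe_mul_ne_bot_iff {c : ℝ} (hc : 0 < c) {z : EReal} : (c : EReal) * z ≠ ⊥ ↔ z ≠ ⊥ := by
  simp [mul_ne_bot, hc.le, hc.not_ge]

end EReal

section Prox

variable {X : Type*} [NormedAddCommGroup X]

def IsProxPoint (g : X → EReal) (x u : X) : Prop :=
  ∀ w, g u + ((1 / 2 * ‖u - x‖ ^ 2 : ℝ) : EReal) ≤ g w + ((1 / 2 * ‖w - x‖ ^ 2 : ℝ) : EReal)

theorem IsProxPoint.ne_top {g : X → EReal} {x u y : X} (hu : IsProxPoint g x u)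
    (hy : g y ≠ ⊤) : g u ≠ ⊤ := by
  intro h
  have := hu y
  rw [h, EReal.top_add_of_ne_bot (EReal.coe_ne_bot _), top_le_iff] at this
  exact (EReal.add_lt_top hy (EReal.coe_ne_top _)).ne this

variable [InnerProductSpace ℝ X]

def HasSubgradientAt (g : X → EReal) (v u : X) : Prop :=
  ∀ w, g u + ((⟪v, w - u⟫ : ℝ) : EReal) ≤ g w

theorem EConvex.const_mul {g : X → EReal} (hg : EConvex g) {c : ℝ} (hc : 0 ≤ c) :
    EConvex fun y => (c : EReal) * g y := by
  intro u v a b ha hb hab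
  calc (c : EReal) * g (a • u + b • v)
      ≤ c * ((a : EReal) * g u + (b : EReal) * g v) :=
        mul_le_mul_of_nonneg_left (hg u v a b ha hb hab) (EReal.coe_nonneg.2 hc)
    _ = (a : EReal) * (c * g u) + (b : EReal) * (c * g v) := by
        rw [EReal.left_distrib_of_nonneg_of_ne_top (EReal.coe_nonneg.2 hc) (EReal.coe_ne_top c),
          mul_left_comm, mul_left_comm (c : EReal)]

theorem IsProxPoint.hasSubgradientAt {g : X → EReal} (hg : EConvex g) (hbot : ∀ y, g y ≠ ⊥)
    {x u : X} (hu : IsProxPoint g x u) (htop : g u ≠ ⊤) : HasSubgradientAt g (x - u) u := by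
  intro w
  rcases eq_or_ne (g w) ⊤ with hw | hw
  · rw [hw]; exact le_top
  obtain ⟨a, ha⟩ : ∃ a : ℝ, g u = a := ⟨_, (EReal.coe_toReal htop (hbot u)).symm⟩
  obtain ⟨b, hb⟩ : ∃ b : ℝ, g w = b := ⟨_, (EReal.coe_toReal hw (hbot w)).symm⟩
  rw [ha, hb, ← EReal.coe_add, EReal.coe_le_coe_iff]
  have hquot : ∀ s : ℝ, 0 < s → s ≤ 1 → 0 ≤ (b - a + ⟪u - x, w - u⟫) + s * (‖w - u‖ ^ 2 / 2) := by
    intro s hs0 hs1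
    have hconv : g (s • w + (1 - s) • u) ≤ ((s * b + (1 - s) * a : ℝ) : EReal) := by
      simpa only [ha, hb, ← EReal.coe_mul, ← EReal.coe_add] using
        hg w u s (1 - s) hs0.le (by linarith) (by ring)
    have hmin : a + 1 / 2 * ‖u - x‖ ^ 2 ≤
        s * b + (1 - s) * a + 1 / 2 * ‖(u - x) + s • (w - u)‖ ^ 2 := by
      have := (hu _).trans (add_le_add hconv le_rfl)
      have e : s • w + (1 - s) • u - x = (u - x) + s • (w - u) := by module
      rwa [ha, ← EReal.coe_add, ← EReal.coe_add, EReal.coe_le_coe_iff, e] at this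
    rw [norm_add_sq_real, real_inner_smul_right, norm_smul, Real.norm_of_nonneg hs0.le] at hmin
    have : 0 ≤ s * ((b - a + ⟪u - x, w - u⟫) + s * (‖w - u‖ ^ 2 / 2)) := by nlinarith
    exact (mul_nonneg_iff_of_pos_left hs0).1 this
  have := nonneg_of_forall_nonneg_add_mul hquot
  rw [← neg_sub u x, inner_neg_left]
  linarith

theorem HasSubgradientAt.of_const_mul {g : X → EReal} {t : ℝ} (ht : 0 < t) {v u : X}
    (h : HasSubgradientAt (fun y => (t : EReal) * g y) v u) : HasSubgradientAt g (t⁻¹ • v) u := by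
  intro w
  have := mul_le_mul_of_nonneg_left (h w) (EReal.coe_nonneg.2 (inv_nonneg.2 ht.le))
  rwa [EReal.left_distrib_of_nonneg_of_ne_top (EReal.coe_nonneg.2 (inv_nonneg.2 ht.le))
    (EReal.coe_ne_top _), ← mul_assoc, ← mul_assoc, ← EReal.coe_mul, inv_mul_cancel₀ ht.ne',
    EReal.coe_one, one_mul, one_mul, ← EReal.coe_mul, ← real_inner_smul_left] at this

theorem inner_sub_le_conjE (p : X → EReal) (u z : X) : ((⟪u, z⟫ : ℝ) : EReal) - p u ≤ conjE p z :=
  le_iSup (fun w => ((⟪w, z⟫ : ℝ) : EReal) - p w) u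

theorem HasSubgradientAt.conjE_eq {p : X → EReal} {u v : X} (h : HasSubgradientAt p v u) :
    conjE p v = ((⟪u, v⟫ : ℝ) : EReal) - p u := by
  refine le_antisymm (iSup_le fun w => ?_) (inner_sub_le_conjE p u v)
  refine (EReal.sub_le_sub le_rfl (h w)).trans_eq ?_
  have : ⟪w, v⟫ = ⟪u, v⟫ + ⟪v, w - u⟫ := by
    rw [inner_sub_right, real_inner_comm w v, real_inner_comm u v]; ring
  rw [this, EReal.coe_add]
  induction p u using EReal.rec with
  | bot => simp
  | top => simp
  | coe z => norm_cast; ring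

theorem IsProxPoint.eq_of_affine_le {g : X → EReal} {y q a : X} {c : ℝ}
    (hle : ∀ w, ((c + ⟪a, w⟫ : ℝ) : EReal) ≤ g w)
    (heq : g (y - a) = ((c + ⟪a, y - a⟫ : ℝ) : EReal)) (hq : IsProxPoint g y q) : q = y - a := by
  have h := (add_le_add (hle q) le_rfl).trans ((hq (y - a)).trans_eq (by rw [heq]))
  rw [← EReal.coe_add, ← EReal.coe_add, EReal.coe_le_coe_iff] at h
  -- `c + ⟪a, w⟫ + ½‖w - y‖²` exceeds its minimum, attained at `y - a`, by `½‖w - (y - a)‖²`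
  have hsq : ‖q - (y - a)‖ ^ 2 = ‖q - y‖ ^ 2 + 2 * ⟪a, q - y⟫ + ‖a‖ ^ 2 := by
    rw [sub_sub_eq_add_sub, add_sub_right_comm, norm_add_sq_real, real_inner_comm]
  rw [sub_sub_cancel_left, norm_neg, inner_sub_right, real_inner_self_eq_norm_sq] at h
  rw [inner_sub_right] at hsq
  rw [← sub_eq_zero, ← norm_eq_zero, ← sq_eq_zero_iff]
  exact le_antisymm (by linarith) (sq_nonneg _)

theorem HasSubgradientAt.eq_of_isProxPoint_conjE {p : X → EReal} {u v q : X} {t : ℝ}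
    (ht : 0 < t) (h : HasSubgradientAt p v u) (htop : p u ≠ ⊤) (hbot : p u ≠ ⊥)
    (hq : IsProxPoint (fun w => ((t⁻¹ : ℝ) : EReal) * conjE p w) (v + t⁻¹ • u) q) : q = v := by
  obtain ⟨a, ha⟩ : ∃ a : ℝ, p u = a := ⟨_, (EReal.coe_toReal htop hbot).symm⟩
  have hℓ : ∀ w, ((-(t⁻¹ * a) + ⟪t⁻¹ • u, w⟫ : ℝ) : EReal) =
      ((t⁻¹ : ℝ) : EReal) * (((⟪u, w⟫ : ℝ) : EReal) - p u) := fun w => by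
    rw [ha, ← EReal.coe_sub, ← EReal.coe_mul, real_inner_smul_left]; congr 1; ring
  have hle : ∀ w, ((-(t⁻¹ * a) + ⟪t⁻¹ • u, w⟫ : ℝ) : EReal) ≤ ((t⁻¹ : ℝ) : EReal) * conjE p w :=
    fun w => (hℓ w).trans_le <|
      mul_le_mul_of_nonneg_left (inner_sub_le_conjE p u w) (EReal.coe_nonneg.2 (inv_nonneg.2 ht.le))
  simpa using hq.eq_of_affine_le hle (by rw [add_sub_cancel_right, hℓ, h.conjE_eq])

end Prox

theorem moreau_identity_general
    {X : Type*} [NormedAddCommGroup X] [InnerProductSpace ℝ X]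
    (p : X → EReal) (t : ℝ) (ht : 0 < t)
    -- p closed proper convex
    (pconv : EConvex p)
    (pbot : ∀ x, p x ≠ ⊥) (pne : ∃ x, p x ≠ ⊤)
    -- P1 = Prox_{tp} and P2 = Prox_{p*/t}
    (P1 P2 : X → X)
    (hP1 : ∀ x u : X,
      ((t : ℝ) : EReal) * p (P1 x) + (((1 / 2) * ‖P1 x - x‖ ^ 2 : ℝ) : EReal) ≤
        ((t : ℝ) : EReal) * p u + (((1 / 2) * ‖u - x‖ ^ 2 : ℝ) : EReal))
    (hP2 : ∀ x u : X,
      ((t⁻¹ : ℝ) : EReal) * conjE p (P2 x) + (((1 / 2) * ‖P2 x - x‖ ^ 2 : ℝ) : EReal) ≤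
        ((t⁻¹ : ℝ) : EReal) * conjE p u + (((1 / 2) * ‖u - x‖ ^ 2 : ℝ) : EReal)) :
    ∀ x : X, P1 x + t • P2 (t⁻¹ • x) = x := by
  intro x
  set u := P1 x
  have hu : IsProxPoint (fun y => (t : EReal) * p y) x u := hP1 x
  obtain ⟨y, hy⟩ := pne
  have hfin : p u ≠ ⊤ :=
    (EReal.coe_mul_ne_top_iff ht).1 (hu.ne_top ((EReal.coe_mul_ne_top_iff ht).2 hy))
  have hsub : HasSubgradientAt p (t⁻¹ • (x - u)) u :=
    HasSubgradientAt.of_const_mul ht <| hu.hasSubgradientAt (pconv.const_mul ht.le)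
      (fun y => (EReal.coe_mul_ne_bot_iff ht).2 (pbot y)) ((EReal.coe_mul_ne_top_iff ht).2 hfin)
  have hx : t⁻¹ • x = t⁻¹ • (x - u) + t⁻¹ • u := by rw [smul_sub, sub_add_cancel]
  have hP2x : P2 (t⁻¹ • x) = t⁻¹ • (x - u) :=
    hsub.eq_of_isProxPoint_conjE ht hfin (pbot u) (by rw [← hx]; exact hP2 (t⁻¹ • x))
  rw [hP2x, smul_inv_smul₀ ht.ne', add_sub_cancel]

theorem moreau_identity
    {X : Type*} [NormedAddCommGroup X] [InnerProductSpace ℝ X] [FiniteDimensional ℝ X]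
    (p : X → EReal) (t : ℝ) (ht : 0 < t)
    -- p closed proper convex
    (pconv : EConvex p) (plsc : LowerSemicontinuous p)
    (pbot : ∀ x, p x ≠ ⊥) (pne : ∃ x, p x ≠ ⊤)
    -- P1 = Prox_{tp} and P2 = Prox_{p*/t}
    (P1 P2 : X → X)
    (hP1 : ∀ x u : X,
      ((t : ℝ) : EReal) * p (P1 x) + (((1 / 2) * ‖P1 x - x‖ ^ 2 : ℝ) : EReal) ≤
        ((t : ℝ) : EReal) * p u + (((1 / 2) * ‖u - x‖ ^ 2 : ℝ) : EReal))
    (hP2 : ∀ x u : X,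
      ((t⁻¹ : ℝ) : EReal) * conjE p (P2 x) + (((1 / 2) * ‖P2 x - x‖ ^ 2 : ℝ) : EReal) ≤
        ((t⁻¹ : ℝ) : EReal) * conjE p u + (((1 / 2) * ‖u - x‖ ^ 2 : ℝ) : EReal)) :
    ∀ x : X, P1 x + t • P2 (t⁻¹ • x) = x :=
  moreau_identity_general p t ht pconv pbot pne P1 P2 hP1 hP2
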